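/- arXiv:1112.1336 — 3 statements merged into one kernel-verified Lean document; each statement's English description precedes it below -/
import Mathlib

section
/- Suppose P(the joint graph of {G_k} on [0,∞) is acyclic)=1, {G_k} is stochastically infinitely quasi-strongly connected with node sequence 0=C_0<C_1<⋯, and P_{k+1} ≤ P_k for all k. Then the randomized consensus algorithm achieves global almost sure consensus if ∑_{m=0}^∞ P_{C_m} = ∞. -/
open MeasureTheory ProbabilityTheory Filter

/-- The randomized consensus process over a random graph process, as in the paper:
`n` nodes, a random digraph process `E`, random weights `a` satisfying the weights
rule with constant `η`, and Bernoulli update decisions `χ` with success probabilities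
`P k`, independent of everything else. -/
structure RandConsensus (Ω : Type*) [MeasurableSpace Ω] where
  /-- number of nodes -/
  n : ℕ
  hn : 2 ≤ n
  μ : Measure Ω
  hμ : IsProbabilityMeasure μ
  /-- the random graph process: `E k ω u v` iff the arc `(u,v)` is present at time `k`. -/
  E : ℕ → Ω → Fin n → Fin n → Bool
  hE : ∀ k u v, Measurable fun ω => E k ω u v
  /-- arcs join two different nodes -/
  hEirrefl : ∀ k ω u, E k ω u u = false
  /-- success probabilities -/
  P : ℕ → ℝ
  hP0 : ∀ k, 0 ≤ P k
  hP1 : ∀ k, P k < 1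
  /-- Bernoulli decisions: node `i` takes the averaging update at time `k` iff `χ k i ω`. -/
  χ : ℕ → Fin n → Ω → Bool
  hχ : ∀ k i, Measurable (χ k i)
  hχP : ∀ k i, μ {ω | χ k i ω = true} = ENNReal.ofReal (P k)
  /-- the random averaging weights -/
  a : ℕ → Fin n → Fin n → Ω → ℝ
  ha : ∀ k i j, Measurable (a k i j)
  /-- weights-rule constant -/
  η : ℝ
  hη : 0 < η
  hηa : ∀ k i ω, ∀ j ∈ insert i (Finset.univ.filter fun j' => E k ω j' i = true),
    η ≤ a k i j ω
  hasum : ∀ k i ω, ∑ j ∈ insert i (Finset.univ.filter fun j' => E k ω j' i = true),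
    a k i j ω = 1
  /-- the Bernoulli decisions are mutually independent (over all times and nodes) -/
  hχindep : iIndepFun (fun (p : ℕ × Fin n) ω => χ p.1 p.2 ω) μ
  /-- the whole family of Bernoulli decisions is independent of the graph-and-weights process -/
  hχext : IndepFun (fun ω (p : ℕ × Fin n) => χ p.1 p.2 ω)
    (fun ω => ((fun k u v => E k ω u v), (fun k i j => a k i j ω))) μ

namespace RandConsensus

variable {Ω : Type*} [MeasurableSpace Ω] (S : RandConsensus Ω)

/-- The neighbor set `N_i(k)` (including `i` itself). -/
def Nbr (k : ℕ) (ω : Ω) (i : Fin S.n) : Finset (Fin S.n) :=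
  insert i (Finset.univ.filter fun j => S.E k ω j i = true)

/-- The (random) state process driven by the algorithm from initial condition `x0`. -/
def state (x0 : Fin S.n → ℝ) : ℕ → Ω → Fin S.n → ℝ
  | 0, _ => x0
  | k + 1, ω => fun i =>
      if S.χ k i ω then ∑ j ∈ S.Nbr k ω i, S.a k i j ω * state x0 k ω j
      else state x0 k ω i

/-- `𝓗 v = max_i v_i - min_i v_i`. -/
def spread (v : Fin S.n → ℝ) : ℝ :=
  Finset.univ.sup' ⟨⟨0, by have := S.hn; omega⟩, Finset.mem_univ _⟩ v -
    Finset.univ.inf' ⟨⟨0, by have := S.hn; omega⟩, Finset.mem_univ _⟩ v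

/-- Global almost sure consensus. -/
def consensus : Prop :=
  ∀ x0 : Fin S.n → ℝ,
    S.μ {ω | Tendsto (fun k => S.spread (S.state x0 k ω)) atTop (nhds 0)} = 1

/-- The `ε`-computation time. -/
noncomputable def Tcom (ε : ℝ) : ℕ∞ :=
  ⨆ x0 : Fin S.n → ℝ,
    ⨅ k ∈ {k : ℕ | S.μ {ω | ε ≤ S.spread (S.state x0 k ω) / S.spread x0}
      ≤ ENNReal.ofReal ε}, (k : ℕ∞)

/-- The arc relation of the graph at time `k`. -/
def arcRel (k : ℕ) (ω : Ω) : Fin S.n → Fin S.n → Prop := fun u v => S.E k ω u v = true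

/-- The arc relation of the joint graph over a set of times. -/
def jointRel (ω : Ω) (s : Set ℕ) : Fin S.n → Fin S.n → Prop :=
  fun u v => ∃ k ∈ s, S.E k ω u v = true

end RandConsensus

/-- A digraph is quasi-strongly connected if it has a root. -/
def IsQSC {n : ℕ} (rel : Fin n → Fin n → Prop) : Prop :=
  ∃ r, ∀ j, Relation.ReflTransGen rel r j

/-- A (bidirectional) digraph is connected if every node is reachable from every node. -/
def IsConn {n : ℕ} (rel : Fin n → Fin n → Prop) : Prop :=
  ∀ i j, Relation.ReflTransGen rel i j

/-- A digraph is acyclic if it has no directed cycle. -/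
def IsAcyclicRel {n : ℕ} (rel : Fin n → Fin n → Prop) : Prop :=
  ∀ v, ¬ Relation.TransGen rel v v


/-! ### Auxiliary measurability lemmas for relations -/

section RelMeas

open Relation

variable {Ωg : Type*} [MeasurableSpace Ωg] {d : ℕ}

lemma measurableSet_listChain (rel : Ωg → Fin d → Fin d → Prop)
    (hrel : ∀ u v, MeasurableSet {ω | rel ω u v}) :
    ∀ (l : List (Fin d)) (a : Fin d), MeasurableSet {ω | List.Chain (rel ω) a l}
  | [], _ => by simp [List.Chain]
  | b :: l, a => by
    have h1 := measurableSet_listChain rel hrel l b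
    have h2 : {ω | List.Chain (rel ω) a (b :: l)}
        = {ω | rel ω a b} ∩ {ω | List.Chain (rel ω) b l} := by
      ext ω; simp [List.Chain, List.isChain_cons_cons]
    rw [h2]; exact (hrel a b).inter h1

lemma measurableSet_reflTransGen (rel : Ωg → Fin d → Fin d → Prop)
    (hrel : ∀ u v, MeasurableSet {ω | rel ω u v}) (a b : Fin d) :
    MeasurableSet {ω | ReflTransGen (rel ω) a b} := by
  have h : {ω | ReflTransGen (rel ω) a b}
      = ⋃ l : List (Fin d),
          {ω | List.Chain (rel ω) a l ∧ (a :: l).getLast (List.cons_ne_nil _ _) = b} := by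
    ext ω
    simp only [Set.mem_setOf_eq, Set.mem_iUnion]
    constructor
    · intro h
      obtain ⟨l, h1, h2⟩ := List.exists_isChain_cons_of_relationReflTransGen h
      exact ⟨l, h1, h2⟩
    · rintro ⟨l, h1, h2⟩
      exact List.relationReflTransGen_of_exists_isChain_cons l h1 h2
  rw [h]
  refine MeasurableSet.iUnion fun l => ?_
  by_cases hb : (a :: l).getLast (List.cons_ne_nil _ _) = b
  · simpa [hb] using measurableSet_listChain rel hrel l a
  · simp [hb]

lemma measurableSet_transGen (rel : Ωg → Fin d → Fin d → Prop)
    (hrel : ∀ u v, MeasurableSet {ω | rel ω u v}) (a b : Fin d) :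
    MeasurableSet {ω | TransGen (rel ω) a b} := by
  have h : {ω | TransGen (rel ω) a b}
      = ⋃ c, {ω | rel ω a c} ∩ {ω | ReflTransGen (rel ω) c b} := by
    ext ω
    simp only [Set.mem_setOf_eq, Set.mem_iUnion, Set.mem_inter_iff]
    exact TransGen.head'_iff
  rw [h]
  exact MeasurableSet.iUnion fun c => (hrel a c).inter (measurableSet_reflTransGen rel hrel c b)

lemma measurableSet_isQSC (rel : Ωg → Fin d → Fin d → Prop)
    (hrel : ∀ u v, MeasurableSet {ω | rel ω u v}) :
    MeasurableSet {ω | IsQSC (rel ω)} := by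
  have h : {ω | IsQSC (rel ω)} = ⋃ r, ⋂ j, {ω | ReflTransGen (rel ω) r j} := by
    ext ω; simp [IsQSC]
  rw [h]
  exact MeasurableSet.iUnion fun r =>
    MeasurableSet.iInter fun j => measurableSet_reflTransGen rel hrel r j

lemma measurableSet_isAcyclicRel (rel : Ωg → Fin d → Fin d → Prop)
    (hrel : ∀ u v, MeasurableSet {ω | rel ω u v}) :
    MeasurableSet {ω | IsAcyclicRel (rel ω)} := by
  have h : {ω | IsAcyclicRel (rel ω)} = ⋂ v, {ω | TransGen (rel ω) v v}ᶜ := by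
    ext ω; simp [IsAcyclicRel]
  rw [h]
  exact MeasurableSet.iInter fun v => (measurableSet_transGen rel hrel v v).compl

end RelMeas
/-! ### A deterministic contraction lemma for real sequences -/

lemma seq_shrink {η ε : ℝ} (hη0 : 0 < η) (hη1 : η ≤ 1) (hε : 0 < ε)
    (d : ℕ → ℝ) (hd0 : ∀ k, 0 ≤ d k) (T : ℕ)
    (h1 : ∀ k, T ≤ k → d (k + 1) ≤ max (d k) ε)
    (h2 : ∀ B, ∃ k, B ≤ k ∧ T ≤ k ∧ d (k + 1) ≤ (1 - η) * d k + ε) :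
    ∃ T', ∀ k, T' ≤ k → d k ≤ ε + ε / η := by
  set b : ℝ := ε + ε / η with hb
  have hεb : ε ≤ b := le_add_of_nonneg_right (by positivity)
  have hηb : η * b = η * ε + ε := by rw [hb, mul_add, mul_div_cancel₀ ε hη0.ne']
  set u : ℕ → ℝ := fun k => max (d k) b with hu
  have humono : ∀ k, T ≤ k → u (k + 1) ≤ u k := by
    intro k hk
    have h := (h1 k hk).trans (max_le_max le_rfl hεb)
    exact max_le h (le_max_right _ _)
  have humono' : ∀ k1 k2, T ≤ k1 → k1 ≤ k2 → u k2 ≤ u k1 := by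
    intro k1 k2 hT h
    induction h with
    | refl => exact le_refl _
    | step h2' ih => exact (humono _ (hT.trans h2')).trans ih
  have hdrop : ∀ k, T ≤ k → d (k + 1) ≤ (1 - η) * d k + ε → u (k + 1) ≤ max (u k - η * ε) b := by
    intro k hT hd
    rcases le_or_gt (d k) b with hc | hc
    · have hdb : d (k + 1) ≤ b := by nlinarith [hd0 k]
      exact le_max_of_le_right (max_le hdb le_rfl)
    · have huk : u k = d k := max_eq_left hc.le
      have : d (k + 1) ≤ d k - η * ε := by nlinarith
      refine max_le (le_max_of_le_left (by rw [huk]; exact this)) (le_max_right _ _)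
  have hiter : ∀ j : ℕ, ∃ k, T ≤ k ∧ u k ≤ max (u T - j * (η * ε)) b := by
    intro j
    induction j with
    | zero => exact ⟨T, le_rfl, by simp [le_max_left]⟩
    | succ j ih =>
        obtain ⟨k, hTk, hk⟩ := ih
        obtain ⟨k', hk'B, hk'T, hk'd⟩ := h2 k
        have hm : u k' ≤ u k := humono' k k' hTk hk'B
        have hd := hdrop k' hk'T hk'd
        refine ⟨k' + 1, hk'T.trans (Nat.le_succ _), ?_⟩
        have step1 : u (k' + 1) ≤ max (u k - η * ε) b :=
          hd.trans (max_le_max (sub_le_sub_right hm _) le_rfl)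
        have step2 : u k - η * ε ≤ max (u T - j * (η * ε)) b - η * ε := sub_le_sub_right hk _
        have step3 : max (u T - j * (η * ε)) b - η * ε
            ≤ max (u T - (j + 1 : ℕ) * (η * ε)) b := by
          rw [← max_sub_sub_right]
          refine max_le_max ?_ ?_
          · exact le_of_eq (by push_cast; ring)
          · have : 0 ≤ η * ε := by positivity
            linarith
        calc u (k' + 1) ≤ max (u k - η * ε) b := step1
          _ ≤ max (max (u T - j * (η * ε)) b - η * ε) b :=
              max_le_max (step2) le_rfl
          _ ≤ max (max (u T - (j + 1 : ℕ) * (η * ε)) b) b := max_le_max step3 le_rfl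
          _ = max (u T - (j + 1 : ℕ) * (η * ε)) b := by rw [max_assoc, max_self]
  have hηε : 0 < η * ε := by positivity
  obtain ⟨j, hj⟩ := exists_nat_ge ((u T - b) / (η * ε))
  have hjb : u T - j * (η * ε) ≤ b := by
    rw [div_le_iff₀ hηε] at hj
    linarith
  obtain ⟨k0, hk0T, hk0⟩ := hiter j
  have hk0b : u k0 ≤ b := hk0.trans (max_le hjb le_rfl)
  refine ⟨k0, fun k hk => ?_⟩
  exact (le_max_left (d k) b).trans ((humono' k0 k hk0T hk).trans hk0b)
/-! ### Events for the randomized consensus process -/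

namespace RandConsensus

variable {Ω : Type*} [MeasurableSpace Ω] (S : RandConsensus Ω)

/-- The graph process as a function into a function space. -/
def Efun (ω : Ω) : ℕ → Fin S.n → Fin S.n → Bool := fun k u v => S.E k ω u v

lemma measurable_Efun : Measurable S.Efun :=
  measurable_pi_lambda _ fun k => measurable_pi_lambda _ fun u =>
    measurable_pi_lambda _ fun v => S.hE k u v

/-- The graph-and-weights bundle. -/
def GWfun (ω : Ω) : (ℕ → Fin S.n → Fin S.n → Bool) × (ℕ → Fin S.n → Fin S.n → ℝ) :=
  (S.Efun ω, fun k i j => S.a k i j ω)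

lemma measurable_GWfun : Measurable S.GWfun :=
  S.measurable_Efun.prodMk <|
    measurable_pi_lambda _ fun k => measurable_pi_lambda _ fun i =>
      measurable_pi_lambda _ fun j => S.ha k i j

/-- The times in the `m`-th window at which `i` has an incoming arc. -/
def arcTimesF (C : ℕ → ℕ) (m : ℕ) (i : Fin S.n) (f : ℕ → Fin S.n → Fin S.n → Bool) :
    Finset ℕ :=
  (Finset.Ico (C m) (C (m + 1))).filter fun k => ∃ u, f k u i = true

/-- The first time of a finite set, with fallback `c0`. -/
noncomputable def tauOf (c0 : ℕ) (F : Finset ℕ) : ℕ :=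
  if h : F.Nonempty then F.min' h else c0

/-- The first time in the `m`-th window at which `i` has an incoming arc. -/
noncomputable def tauF (C : ℕ → ℕ) (m : ℕ) (i : Fin S.n)
    (f : ℕ → Fin S.n → Fin S.n → Bool) : ℕ :=
  tauOf (C m) (S.arcTimesF C m i f)

lemma tauF_mem_Ico (C : ℕ → ℕ) (hC : C m < C (m + 1)) (i : Fin S.n)
    (f : ℕ → Fin S.n → Fin S.n → Bool) :
    S.tauF C m i f ∈ Finset.Ico (C m) (C (m + 1)) := by
  rw [tauF, tauOf]
  split_ifs with h
  · exact Finset.mem_of_mem_filter _ (Finset.min'_mem _ h)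
  · exact Finset.mem_Ico.mpr ⟨le_rfl, hC⟩

lemma exists_arc_at_tauF (C : ℕ → ℕ) (i : Fin S.n) (f : ℕ → Fin S.n → Fin S.n → Bool)
    (h : (S.arcTimesF C m i f).Nonempty) : ∃ u, f (S.tauF C m i f) u i = true := by
  rw [tauF, tauOf, dif_pos h]
  exact (Finset.mem_filter.mp (Finset.min'_mem _ h)).2

/-- The QSC event for the `m`-th window, in the codomain of the graph process. -/
def QSCtgt (C : ℕ → ℕ) (m : ℕ) : Set (ℕ → Fin S.n → Fin S.n → Bool) :=
  {f | IsQSC fun u v => ∃ k ∈ Set.Ico (C m) (C (m + 1)), f k u v = true}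

/-- The QSC event for the `m`-th window. -/
def QSCev (C : ℕ → ℕ) (m : ℕ) : Set Ω :=
  {ω | IsQSC (S.jointRel ω (Set.Ico (C m) (C (m + 1))))}

/-- The success event for the `m`-th window and node `i`: the window is QSC and node `i`
fires at the first in-arc time of the window. -/
def Dev (C : ℕ → ℕ) (m : ℕ) (i : Fin S.n) : Set Ω :=
  S.QSCev C m ∩ {ω | S.χ (S.tauF C m i (S.Efun ω)) i ω = true}

lemma QSCev_eq_preimage (C : ℕ → ℕ) (m : ℕ) :
    S.QSCev C m = S.Efun ⁻¹' S.QSCtgt C m := rfl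

lemma measurable_apply_bool (k : ℕ) (u v : Fin S.n) :
    Measurable fun f : ℕ → Fin S.n → Fin S.n → Bool => f k u v := by
  have h1 : Measurable fun f : ℕ → Fin S.n → Fin S.n → Bool => f k := measurable_pi_apply k
  have h2 : Measurable fun g : Fin S.n → Fin S.n → Bool => g u := measurable_pi_apply u
  have h3 : Measurable fun g : Fin S.n → Bool => g v := measurable_pi_apply v
  exact h3.comp (h2.comp h1)

lemma measurableSet_QSCtgt (C : ℕ → ℕ) (m : ℕ) : MeasurableSet (S.QSCtgt C m) := by
  apply measurableSet_isQSC
  intro u v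
  have h : {f : ℕ → Fin S.n → Fin S.n → Bool | ∃ k ∈ Set.Ico (C m) (C (m + 1)), f k u v = true}
      = ⋃ k ∈ Set.Ico (C m) (C (m + 1)), {f | f k u v = true} := by
    ext f; simp
  rw [h]
  exact MeasurableSet.biUnion (Set.to_countable _) fun k _ =>
    S.measurable_apply_bool k u v (measurableSet_singleton true)

lemma measurableSet_QSCev (C : ℕ → ℕ) (m : ℕ) : MeasurableSet (S.QSCev C m) := by
  rw [QSCev_eq_preimage]
  exact S.measurable_Efun (S.measurableSet_QSCtgt C m)

lemma measurableSet_arcTimesF_eq (C : ℕ → ℕ) (m : ℕ) (i : Fin S.n) (F : Finset ℕ) :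
    MeasurableSet {f : ℕ → Fin S.n → Fin S.n → Bool | S.arcTimesF C m i f = F} := by
  classical
  by_cases hF : F ⊆ Finset.Ico (C m) (C (m + 1))
  · have h : {f : ℕ → Fin S.n → Fin S.n → Bool | S.arcTimesF C m i f = F}
        = ⋂ k ∈ Finset.Ico (C m) (C (m + 1)),
            {f : ℕ → Fin S.n → Fin S.n → Bool | (∃ u, f k u i = true) ↔ k ∈ F} := by
      ext f
      simp only [Set.mem_setOf_eq, Set.mem_iInter]
      constructor
      · rintro rfl k hk
        constructor
        · intro hu; exact Finset.mem_filter.mpr ⟨hk, hu⟩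
        · intro hm; exact (Finset.mem_filter.mp hm).2
      · intro h
        ext k
        simp only [arcTimesF, Finset.mem_filter]
        constructor
        · rintro ⟨hk, hu⟩; exact (h k hk).1 hu
        · intro hk; exact ⟨hF hk, (h _ (hF hk)).2 hk⟩
    rw [h]
    refine MeasurableSet.biInter (Set.to_countable _) fun k _ => ?_
    by_cases hk : k ∈ F
    · have : {f : ℕ → Fin S.n → Fin S.n → Bool | (∃ u, f k u i = true) ↔ k ∈ F}
          = ⋃ u, {f | f k u i = true} := by ext f; simp [hk]
      rw [this]
      exact MeasurableSet.iUnion fun u =>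
        S.measurable_apply_bool k u i (measurableSet_singleton true)
    · have : {f : ℕ → Fin S.n → Fin S.n → Bool | (∃ u, f k u i = true) ↔ k ∈ F}
          = ⋂ u, {f | f k u i = true}ᶜ := by
        ext f; simp [hk]
      rw [this]
      exact MeasurableSet.iInter fun u =>
        (S.measurable_apply_bool k u i (measurableSet_singleton true)).compl
  · have h : {f : ℕ → Fin S.n → Fin S.n → Bool | S.arcTimesF C m i f = F} = ∅ := by
      ext f
      simp only [Set.mem_setOf_eq, Set.mem_empty_iff_false, iff_false]
      intro hf
      exact hF (hf ▸ Finset.filter_subset _ _)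
    rw [h]; exact MeasurableSet.empty

lemma measurableSet_tauF_eq (C : ℕ → ℕ) (m : ℕ) (i : Fin S.n) (t : ℕ) :
    MeasurableSet {f : ℕ → Fin S.n → Fin S.n → Bool | S.tauF C m i f = t} := by
  have h : {f : ℕ → Fin S.n → Fin S.n → Bool | S.tauF C m i f = t}
      = ⋃ (F : Finset ℕ) (_ : tauOf (C m) F = t),
          {f : ℕ → Fin S.n → Fin S.n → Bool | S.arcTimesF C m i f = F} := by
    ext f
    simp only [Set.mem_setOf_eq, Set.mem_iUnion]
    constructor
    · intro hf; exact ⟨_, hf, rfl⟩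
    · rintro ⟨F, hF, hfF⟩; rw [tauF, hfF]; exact hF
  rw [h]
  exact MeasurableSet.iUnion fun F => MeasurableSet.iUnion fun _ =>
    S.measurableSet_arcTimesF_eq C m i F

lemma meas_chi_false (t : ℕ) (i : Fin S.n) :
    S.μ {ω | S.χ t i ω = false} = 1 - ENNReal.ofReal (S.P t) := by
  haveI := S.hμ
  have h1 : {ω | S.χ t i ω = false} = {ω | S.χ t i ω = true}ᶜ := by
    ext ω; simp
  have h2 : MeasurableSet {ω | S.χ t i ω = true} :=
    S.hχ t i (measurableSet_singleton true)
  rw [h1, measure_compl h2 (measure_ne_top _ _), measure_univ, S.hχP]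

end RandConsensus
/-! ### The key probability estimate -/

namespace RandConsensus

variable {Ω : Type*} [MeasurableSpace Ω] (S : RandConsensus Ω)

lemma ennreal_factor_le {p c qe : ENNReal} (hp1 : p ≤ 1) (hqp : qe ≤ p) (hc1 : c ≤ 1) :
    p * (1 - c) + (1 - p) ≤ 1 - qe * c := by
  have hqc : qe * c ≠ ⊤ := by
    intro h
    have := (mul_le_mul' (hqp.trans hp1) hc1).trans_eq' h
    simp only [mul_one] at this
    exact absurd (h ▸ (mul_le_mul' (hqp.trans hp1) hc1)) (by simp)
  refine ENNReal.le_sub_of_add_le_right hqc ?_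
  calc p * (1 - c) + (1 - p) + qe * c
      ≤ p * (1 - c) + (1 - p) + p * c := add_le_add le_rfl (mul_le_mul_left hqp _)
    _ = (p * (1 - c) + p * c) + (1 - p) := by ring
    _ = p * ((1 - c) + c) + (1 - p) := by rw [mul_add]
    _ = p * 1 + (1 - p) := by rw [tsub_add_cancel_of_le hc1]
    _ = 1 := by rw [mul_one, add_tsub_cancel_of_le hp1]

lemma meas_iInter_Dev_compl_le (C : ℕ → ℕ) (hCmono : StrictMono C)
    (q : ℝ)
    (hindep : iIndepSet
      (fun m : ℕ => {ω | IsQSC (S.jointRel ω (Set.Ico (C m) (C (m + 1))))}) S.μ)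
    (hconn : ∀ m : ℕ, ENNReal.ofReal q ≤
      S.μ {ω | IsQSC (S.jointRel ω (Set.Ico (C m) (C (m + 1))))})
    (hmono : ∀ k, S.P (k + 1) ≤ S.P k)
    (i : Fin S.n) (M N : ℕ) :
    S.μ (⋂ j : Fin N, (S.Dev C (M + (j : ℕ)) i)ᶜ)
      ≤ ∏ j : Fin N, (1 - ENNReal.ofReal q * ENNReal.ofReal (S.P (C (M + (j : ℕ) + 1)))) := by
  classical
  haveI := S.hμ
  have hPanti : Antitone S.P := antitone_nat_of_succ_le hmono
  set qe := ENNReal.ofReal q with hqe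
  set c : Fin N → ENNReal := fun j => ENNReal.ofReal (S.P (C (M + (j : ℕ) + 1))) with hc
  set p : Fin N → ENNReal := fun j => S.μ (S.QSCev C (M + (j : ℕ))) with hp
  have hp1 : ∀ j, p j ≤ 1 := fun j => prob_le_one
  have hqp : ∀ j, qe ≤ p j := fun j => hconn (M + (j : ℕ))
  have hc1 : ∀ j, c j ≤ 1 := fun j => ENNReal.ofReal_le_one.mpr (le_of_lt (S.hP1 _))
  set V : Fin N → Finset (Option ℕ) := fun j =>
    insert none ((Finset.Ico (C (M + (j : ℕ))) (C (M + (j : ℕ) + 1))).image some) with hV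
  set Wev : Fin N → Option ℕ → Set Ω := fun j v =>
    v.elim ((S.QSCev C (M + (j : ℕ)))ᶜ)
      (fun t => S.QSCev C (M + (j : ℕ)) ∩
        (S.Efun ⁻¹' {f | S.tauF C (M + (j : ℕ)) i f = t})) with hWev
  set χev : Option ℕ → Set Ω :=
    fun v => v.elim Set.univ (fun t => {ω | S.χ t i ω = false}) with hχev
  have hWmeas : ∀ j v, MeasurableSet (Wev j v) := by
    intro j v
    cases v with
    | none => exact (S.measurableSet_QSCev _ _).compl
    | some t =>
        exact (S.measurableSet_QSCev _ _).inter
          (S.measurable_Efun (S.measurableSet_tauF_eq _ _ _ _))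
  -- Step 1: covering
  have hcover : (⋂ j : Fin N, (S.Dev C (M + (j : ℕ)) i)ᶜ) ⊆
      ⋃ y ∈ Fintype.piFinset V, ((⋂ j, Wev j (y j)) ∩ ⋂ j, χev (y j)) := by
    intro ω hω
    simp only [Set.mem_iInter, Set.mem_compl_iff] at hω
    set y : Fin N → Option ℕ := fun j =>
      if ω ∈ S.QSCev C (M + (j : ℕ)) then some (S.tauF C (M + (j : ℕ)) i (S.Efun ω))
      else none with hy
    have hymem : y ∈ Fintype.piFinset V := by
      rw [Fintype.mem_piFinset]
      intro j
      by_cases h : ω ∈ S.QSCev C (M + (j : ℕ))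
      · simp only [hy, if_pos h, hV]
        exact Finset.mem_insert_of_mem (Finset.mem_image_of_mem some
          (S.tauF_mem_Ico C (hCmono (Nat.lt_succ_self _)) i (S.Efun ω)))
      · simp [hy, if_neg h, hV]
    refine Set.mem_iUnion₂.mpr ⟨y, hymem,
      ⟨Set.mem_iInter.mpr fun j => ?_, Set.mem_iInter.mpr fun j => ?_⟩⟩
    · by_cases h : ω ∈ S.QSCev C (M + (j : ℕ))
      · simp only [hy, if_pos h]
        exact ⟨h, rfl⟩
      · simp only [hy, if_neg h]
        exact h
    · by_cases h : ω ∈ S.QSCev C (M + (j : ℕ))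
      · simp only [hy, if_pos h]
        have hno := hω j
        have : ¬ (S.χ (S.tauF C (M + (j : ℕ)) i (S.Efun ω)) i ω = true) :=
          fun hχt => hno ⟨h, hχt⟩
        show S.χ (S.tauF C (M + (j : ℕ)) i (S.Efun ω)) i ω = false
        simpa using this
      · simp only [hy, if_neg h]
        exact Set.mem_univ ω
  have hstep2 : S.μ (⋂ j : Fin N, (S.Dev C (M + (j : ℕ)) i)ᶜ)
      ≤ ∑ y ∈ Fintype.piFinset V, S.μ ((⋂ j, Wev j (y j)) ∩ ⋂ j, χev (y j)) :=
    (measure_mono hcover).trans (measure_biUnion_finset_le _ _)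
  -- Step 3: independence factorization
  have hfact : ∀ y : Fin N → Option ℕ,
      S.μ ((⋂ j, Wev j (y j)) ∩ ⋂ j, χev (y j))
        = S.μ (⋂ j, Wev j (y j)) * S.μ (⋂ j, χev (y j)) := by
    intro y
    set B : Set ((ℕ → Fin S.n → Fin S.n → Bool) × (ℕ → Fin S.n → Fin S.n → ℝ)) :=
      ⋂ j, Prod.fst ⁻¹' ((y j).elim ((S.QSCtgt C (M + (j : ℕ)))ᶜ)
        (fun t => S.QSCtgt C (M + (j : ℕ)) ∩ {f | S.tauF C (M + (j : ℕ)) i f = t})) with hB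
    set A : Set (ℕ × Fin S.n → Bool) :=
      ⋂ j, (y j).elim Set.univ (fun t => {g | g (t, i) = false}) with hA
    have hBmeas : MeasurableSet B := by
      refine MeasurableSet.iInter fun j => ?_
      cases y j with
      | none => exact measurable_fst (S.measurableSet_QSCtgt _ _).compl
      | some t =>
          exact measurable_fst
            ((S.measurableSet_QSCtgt _ _).inter (S.measurableSet_tauF_eq _ _ _ _))
    have hAmeas : MeasurableSet A := by
      refine MeasurableSet.iInter fun j => ?_
      cases y j with
      | none => exact MeasurableSet.univ
      | some t =>
          have hm : Measurable fun g : ℕ × Fin S.n → Bool => g (t, i) :=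
            measurable_pi_apply _
          exact hm (measurableSet_singleton false)
    have hWB : (⋂ j, Wev j (y j)) = S.GWfun ⁻¹' B := by
      rw [hB, Set.preimage_iInter]
      refine Set.iInter_congr fun j => ?_
      cases y j with
      | none => rfl
      | some t => rfl
    have hXA : (⋂ j, χev (y j)) = (fun ω (pp : ℕ × Fin S.n) => S.χ pp.1 pp.2 ω) ⁻¹' A := by
      rw [hA, Set.preimage_iInter]
      refine Set.iInter_congr fun j => ?_
      cases y j with
      | none => rfl
      | some t => rfl
    rw [hWB, hXA, Set.inter_comm, mul_comm]
    exact S.hχext.measure_inter_preimage_eq_mul A B hAmeas hBmeas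
  -- Step 4: the χ-part bound
  have hτrange : ∀ y ∈ Fintype.piFinset V, ∀ j : Fin N, ∀ t, y j = some t →
      t ∈ Finset.Ico (C (M + (j : ℕ))) (C (M + (j : ℕ) + 1)) := by
    intro y hy j t ht
    have h := (Fintype.mem_piFinset.mp hy) j
    rw [ht, hV] at h
    simp only [Finset.mem_insert] at h
    rcases h with h | h
    · exact absurd h (by simp)
    · obtain ⟨t', ht', h'⟩ := Finset.mem_image.mp h
      obtain rfl : t' = t := Option.some_injective _ h'
      exact ht'
  have hχbound : ∀ y ∈ Fintype.piFinset V,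
      S.μ (⋂ j, χev (y j))
        ≤ ∏ j ∈ Finset.univ.filter (fun j => (y j).isSome), (1 - c j) := by
    intro y hy
    set Sy := Finset.univ.filter (fun j : Fin N => (y j).isSome) with hSy
    set ty : Fin N → ℕ := fun j => (y j).getD 0 with hty
    have hySy : ∀ j ∈ Sy, y j = some (ty j) := by
      intro j hj
      rw [hSy, Finset.mem_filter] at hj
      obtain ⟨t, ht⟩ := Option.isSome_iff_exists.mp hj.2
      simp only [ht, hty, Option.getD_some]
    have htymem : ∀ j ∈ Sy, ty j ∈ Finset.Ico (C (M + (j : ℕ))) (C (M + (j : ℕ) + 1)) :=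
      fun j hj => hτrange y hy j (ty j) (hySy j hj)
    have h1 : (⋂ j, χev (y j)) = ⋂ j ∈ Sy, {ω | S.χ (ty j) i ω = false} := by
      ext ω
      simp only [Set.mem_iInter]
      constructor
      · intro h j hj
        have h' := h j
        rw [hySy j hj] at h'
        exact h'
      · intro h j
        by_cases hj : j ∈ Sy
        · rw [hySy j hj]
          exact h j hj
        · have hnone : y j = none := by
            rw [hSy, Finset.mem_filter] at hj
            push_neg at hj
            exact Option.not_isSome_iff_eq_none.mp (hj (Finset.mem_univ j))
          rw [hnone]
          exact Set.mem_univ ω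
    have hinj : ∀ j1 ∈ Sy, ∀ j2 ∈ Sy,
        ((ty j1, i) : ℕ × Fin S.n) = (ty j2, i) → j1 = j2 := by
      intro j1 h1' j2 h2' he
      by_contra hne
      have ht1 := Finset.mem_Ico.mp (htymem j1 h1')
      have ht2 := Finset.mem_Ico.mp (htymem j2 h2')
      have hty12 : ty j1 = ty j2 := congrArg Prod.fst he
      have hjne : (j1 : ℕ) ≠ (j2 : ℕ) := fun h => hne (Fin.ext h)
      rcases lt_or_gt_of_ne hjne with h | h
      · have : C (M + (j1 : ℕ) + 1) ≤ C (M + (j2 : ℕ)) := hCmono.monotone (by omega)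
        omega
      · have : C (M + (j2 : ℕ) + 1) ≤ C (M + (j1 : ℕ)) := hCmono.monotone (by omega)
        omega
    have h2 : (⋂ j ∈ Sy, {ω | S.χ (ty j) i ω = false})
        = ⋂ pp ∈ Sy.image (fun j => ((ty j, i) : ℕ × Fin S.n)), {ω | S.χ pp.1 pp.2 ω = false} := by
      ext ω
      simp only [Set.mem_iInter, Finset.mem_image]
      constructor
      · rintro h pp ⟨j, hj, rfl⟩
        exact h j hj
      · intro h j hj
        exact h (ty j, i) ⟨j, hj, rfl⟩
    have h3 : S.μ (⋂ pp ∈ Sy.image (fun j => ((ty j, i) : ℕ × Fin S.n)),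
          {ω | S.χ pp.1 pp.2 ω = false})
        = ∏ pp ∈ Sy.image (fun j => ((ty j, i) : ℕ × Fin S.n)), S.μ {ω | S.χ pp.1 pp.2 ω = false} := by
      refine S.hχindep.meas_biInter fun pp _ => ?_
      exact MeasurableSpace.measurableSet_comap.mpr ⟨{false}, measurableSet_singleton false, rfl⟩
    rw [h1, h2, h3, Finset.prod_image hinj]
    refine Finset.prod_le_prod' fun j hj => ?_
    rw [S.meas_chi_false (ty j) i]
    refine tsub_le_tsub_left (ENNReal.ofReal_le_ofReal ?_) 1
    refine hPanti ?_
    have := Finset.mem_Ico.mp (htymem j hj)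
    omega
  -- Step 5: regrouping and the QSC-independence bound
  set φ : (Fin N → Option ℕ) → Finset (Fin N) :=
    fun y => Finset.univ.filter (fun j => (y j).isSome) with hφ
  have hstep5 : S.μ (⋂ j : Fin N, (S.Dev C (M + (j : ℕ)) i)ᶜ)
      ≤ ∑ y ∈ Fintype.piFinset V, S.μ (⋂ j, Wev j (y j)) * ∏ j ∈ φ y, (1 - c j) := by
    refine hstep2.trans (Finset.sum_le_sum fun y hy => ?_)
    rw [hfact y]
    exact mul_le_mul_right (hχbound y hy) _
  have hregroup : ∑ y ∈ Fintype.piFinset V, S.μ (⋂ j, Wev j (y j)) * ∏ j ∈ φ y, (1 - c j)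
      = ∑ SS ∈ (Finset.univ : Finset (Fin N)).powerset,
          ∑ y ∈ (Fintype.piFinset V).filter (fun y => φ y = SS),
            S.μ (⋂ j, Wev j (y j)) * ∏ j ∈ φ y, (1 - c j) :=
    (Finset.sum_fiberwise_of_maps_to
      (fun y _ => Finset.mem_powerset.mpr (Finset.filter_subset _ _)) _).symm
  -- measure of a QSC pattern
  have hpattern : ∀ SS : Finset (Fin N),
      S.μ (⋂ j : Fin N,
          (if j ∈ SS then S.QSCev C (M + (j : ℕ)) else (S.QSCev C (M + (j : ℕ)))ᶜ))
        = (∏ j ∈ SS, p j) * ∏ j ∈ Finset.univ \ SS, (1 - p j) := by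
    intro SS
    set f : ℕ → Set Ω :=
      fun m => {ω | IsQSC (S.jointRel ω (Set.Ico (C m) (C (m + 1))))} with hf
    have hiI : ProbabilityTheory.iIndep (fun m => MeasurableSpace.generateFrom {f m}) S.μ :=
      (ProbabilityTheory.iIndepSet_iff_iIndep f S.μ).mp hindep
    set s : ℕ → Set Ω := fun m =>
      if ∃ j : Fin N, M + (j : ℕ) = m ∧ j ∈ SS then f m else (f m)ᶜ with hs
    have hsMj : ∀ j : Fin N, s (M + (j : ℕ)) =
        (if j ∈ SS then S.QSCev C (M + (j : ℕ)) else (S.QSCev C (M + (j : ℕ)))ᶜ) := by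
      intro j
      simp only [hs]
      by_cases hj : j ∈ SS
      · have hcond : ∃ j' : Fin N, M + (j' : ℕ) = M + (j : ℕ) ∧ j' ∈ SS := ⟨j, rfl, hj⟩
        rw [if_pos hcond, if_pos hj]
        rfl
      · have hcond : ¬ ∃ j' : Fin N, M + (j' : ℕ) = M + (j : ℕ) ∧ j' ∈ SS := by
          rintro ⟨j', hj', hj'SS⟩
          exact hj ((Fin.ext (by omega) : j' = j) ▸ hj'SS)
        rw [if_neg hcond, if_neg hj]
        rfl
    have hinjM : ∀ j1 ∈ (Finset.univ : Finset (Fin N)),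
        ∀ j2 ∈ (Finset.univ : Finset (Fin N)),
        M + (j1 : ℕ) = M + (j2 : ℕ) → j1 = j2 :=
      fun j1 _ j2 _ h => Fin.ext (by omega)
    have hsmem : ∀ m ∈ Finset.univ.image (fun j : Fin N => M + (j : ℕ)),
        MeasurableSet[MeasurableSpace.generateFrom {f m}] (s m) := by
      intro m _
      simp only [hs]
      split_ifs
      · exact MeasurableSpace.measurableSet_generateFrom (Set.mem_singleton _)
      · exact (MeasurableSpace.measurableSet_generateFrom (Set.mem_singleton _)).compl
    have h3 := hiI.meas_biInter hsmem
    have h4 : (⋂ m ∈ Finset.univ.image (fun j : Fin N => M + (j : ℕ)), s m)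
        = ⋂ j : Fin N,
            (if j ∈ SS then S.QSCev C (M + (j : ℕ)) else (S.QSCev C (M + (j : ℕ)))ᶜ) := by
      ext ω
      simp only [Set.mem_iInter, Finset.mem_image, Finset.mem_univ, true_and]
      constructor
      · intro h j
        rw [← hsMj j]
        exact h _ ⟨j, rfl⟩
      · rintro h m ⟨j, rfl⟩
        rw [hsMj j]
        exact h j
    have h5 : ∏ m ∈ Finset.univ.image (fun j : Fin N => M + (j : ℕ)), S.μ (s m)
        = ∏ j : Fin N, S.μ (s (M + (j : ℕ))) := Finset.prod_image hinjM
    rw [← h4, h3, h5]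
    have h6 : ∀ j : Fin N, S.μ (s (M + (j : ℕ)))
        = (if j ∈ SS then p j else 1 - p j) := by
      intro j
      rw [hsMj j]
      by_cases hj : j ∈ SS
      · rw [if_pos hj, if_pos hj]
      · rw [if_neg hj, if_neg hj, prob_compl_eq_one_sub (S.measurableSet_QSCev _ _)]
    rw [Finset.prod_congr rfl (fun j _ => h6 j), Finset.prod_ite]
    congr 1
    · congr 1
      ext j; simp
    · congr 1
      ext j; simp
  -- bound for each fiber
  have hinner : ∀ SS ∈ (Finset.univ : Finset (Fin N)).powerset,
      ∑ y ∈ (Fintype.piFinset V).filter (fun y => φ y = SS),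
          S.μ (⋂ j, Wev j (y j)) * ∏ j ∈ φ y, (1 - c j)
        ≤ (∏ j ∈ SS, p j * (1 - c j)) * ∏ j ∈ Finset.univ \ SS, (1 - p j) := by
    intro SS _
    have h1 : ∀ y ∈ (Fintype.piFinset V).filter (fun y => φ y = SS),
        S.μ (⋂ j, Wev j (y j)) * ∏ j ∈ φ y, (1 - c j)
          = S.μ (⋂ j, Wev j (y j)) * ∏ j ∈ SS, (1 - c j) := by
      intro y hy
      rw [(Finset.mem_filter.mp hy).2]
    rw [Finset.sum_congr rfl h1, ← Finset.sum_mul]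
    have hWsub : ∀ y ∈ (Fintype.piFinset V).filter (fun y => φ y = SS),
        (⋂ j, Wev j (y j)) ⊆ ⋂ j : Fin N,
          (if j ∈ SS then S.QSCev C (M + (j : ℕ)) else (S.QSCev C (M + (j : ℕ)))ᶜ) := by
      intro y hy ω hω
      obtain ⟨_, hy2⟩ := Finset.mem_filter.mp hy
      rw [Set.mem_iInter] at hω ⊢
      intro j
      by_cases hj : j ∈ SS
      · rw [if_pos hj]
        have hjS : (y j).isSome := by
          rw [← hy2, hφ] at hj
          exact (Finset.mem_filter.mp hj).2
        obtain ⟨t, ht⟩ := Option.isSome_iff_exists.mp hjS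
        have hωj := hω j
        rw [ht] at hωj
        exact hωj.1
      · rw [if_neg hj]
        have hjS : y j = none := by
          rw [← hy2, hφ, Finset.mem_filter] at hj
          push_neg at hj
          exact Option.not_isSome_iff_eq_none.mp (hj (Finset.mem_univ j))
        have hωj := hω j
        rw [hjS] at hωj
        exact hωj
    have hdisj : (↑((Fintype.piFinset V).filter (fun y => φ y = SS)) :
        Set (Fin N → Option ℕ)).PairwiseDisjoint (fun y => ⋂ j, Wev j (y j)) := by
      intro y1 _ y2 _ hne
      obtain ⟨j, hj⟩ : ∃ j, y1 j ≠ y2 j := by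
        by_contra h
        push_neg at h
        exact hne (funext h)
      refine Set.disjoint_left.mpr fun {ω} hω1 hω2 => ?_
      have hw1 := Set.mem_iInter.mp hω1 j
      have hw2 := Set.mem_iInter.mp hω2 j
      cases hy1 : y1 j with
      | none =>
          cases hy2 : y2 j with
          | none => exact hj (hy1.trans hy2.symm)
          | some t =>
              rw [hy1] at hw1
              rw [hy2] at hw2
              exact hw1 hw2.1
      | some t =>
          cases hy2 : y2 j with
          | none =>
              rw [hy1] at hw1
              rw [hy2] at hw2
              exact hw2 hw1.1
          | some t' =>
              rw [hy1] at hw1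
              rw [hy2] at hw2
              have he : t = t' := hw1.2.symm.trans hw2.2
              exact hj (by rw [hy1, hy2, he])
    have hsum_le : ∑ y ∈ (Fintype.piFinset V).filter (fun y => φ y = SS),
        S.μ (⋂ j, Wev j (y j))
          ≤ S.μ (⋂ j : Fin N,
              (if j ∈ SS then S.QSCev C (M + (j : ℕ)) else (S.QSCev C (M + (j : ℕ)))ᶜ)) := by
      rw [← measure_biUnion_finset hdisj
        (fun y _ => MeasurableSet.iInter fun j => hWmeas j (y j))]
      exact measure_mono (Set.iUnion₂_subset hWsub)
    calc (∑ y ∈ (Fintype.piFinset V).filter (fun y => φ y = SS),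
            S.μ (⋂ j, Wev j (y j))) * ∏ j ∈ SS, (1 - c j)
        ≤ S.μ (⋂ j : Fin N,
            (if j ∈ SS then S.QSCev C (M + (j : ℕ)) else (S.QSCev C (M + (j : ℕ)))ᶜ))
              * ∏ j ∈ SS, (1 - c j) := mul_le_mul_left hsum_le _
      _ = ((∏ j ∈ SS, p j) * ∏ j ∈ Finset.univ \ SS, (1 - p j)) * ∏ j ∈ SS, (1 - c j) := by
            rw [hpattern SS]
      _ = (∏ j ∈ SS, p j * (1 - c j)) * ∏ j ∈ Finset.univ \ SS, (1 - p j) := by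
            rw [Finset.prod_mul_distrib]
            ring
  -- put everything together
  have hfac : ∀ j : Fin N, p j * (1 - c j) + (1 - p j) ≤ 1 - qe * c j :=
    fun j => ennreal_factor_le (hp1 j) (hqp j) (hc1 j)
  calc S.μ (⋂ j : Fin N, (S.Dev C (M + (j : ℕ)) i)ᶜ)
      ≤ ∑ y ∈ Fintype.piFinset V, S.μ (⋂ j, Wev j (y j)) * ∏ j ∈ φ y, (1 - c j) := hstep5
    _ = ∑ SS ∈ (Finset.univ : Finset (Fin N)).powerset,
          ∑ y ∈ (Fintype.piFinset V).filter (fun y => φ y = SS),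
            S.μ (⋂ j, Wev j (y j)) * ∏ j ∈ φ y, (1 - c j) := hregroup
    _ ≤ ∑ SS ∈ (Finset.univ : Finset (Fin N)).powerset,
          (∏ j ∈ SS, p j * (1 - c j)) * ∏ j ∈ Finset.univ \ SS, (1 - p j) :=
        Finset.sum_le_sum hinner
    _ = ∏ j : Fin N, (p j * (1 - c j) + (1 - p j)) :=
        (Finset.prod_add (fun j => p j * (1 - c j)) (fun j => 1 - p j) Finset.univ).symm
    _ ≤ ∏ j : Fin N, (1 - qe * c j) := Finset.prod_le_prod' fun j _ => hfac j

end RandConsensus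
/-! ### The tail intersection is null -/

namespace RandConsensus

variable {Ω : Type*} [MeasurableSpace Ω] (S : RandConsensus Ω)

lemma meas_iInter_Ici_Dev_compl (C : ℕ → ℕ) (hCmono : StrictMono C)
    (q : ℝ) (hq0 : 0 < q)
    (hindep : iIndepSet
      (fun m : ℕ => {ω | IsQSC (S.jointRel ω (Set.Ico (C m) (C (m + 1))))}) S.μ)
    (hconn : ∀ m : ℕ, ENNReal.ofReal q ≤
      S.μ {ω | IsQSC (S.jointRel ω (Set.Ico (C m) (C (m + 1))))})
    (hmono : ∀ k, S.P (k + 1) ≤ S.P k)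
    (hsum : ¬ Summable (fun m => S.P (C m)))
    (i : Fin S.n) (M : ℕ) :
    S.μ (⋂ m ∈ Set.Ici M, (S.Dev C m i)ᶜ) = 0 := by
  have hb : ∀ N : ℕ, S.μ (⋂ m ∈ Set.Ici M, (S.Dev C m i)ᶜ)
      ≤ ENNReal.ofReal (Real.exp (- (q * ∑ j ∈ Finset.range N, S.P (C (M + j + 1))))) := by
    intro N
    have hsub : (⋂ m ∈ Set.Ici M, (S.Dev C m i)ᶜ)
        ⊆ ⋂ j : Fin N, (S.Dev C (M + (j : ℕ)) i)ᶜ := by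
      intro ω hω
      rw [Set.mem_iInter₂] at hω
      exact Set.mem_iInter.mpr fun j => hω (M + (j : ℕ)) (Nat.le_add_right _ _)
    refine (measure_mono hsub).trans
      ((S.meas_iInter_Dev_compl_le C hCmono q hindep hconn hmono i M N).trans ?_)
    have hfac : ∀ j : Fin N,
        (1 : ENNReal) - ENNReal.ofReal q * ENNReal.ofReal (S.P (C (M + (j : ℕ) + 1)))
          ≤ ENNReal.ofReal (Real.exp (- (q * S.P (C (M + (j : ℕ) + 1))))) := by
      intro j
      have h0 : (0 : ℝ) ≤ q * S.P (C (M + (j : ℕ) + 1)) := by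
        have := S.hP0 (C (M + (j : ℕ) + 1)); positivity
      rw [← ENNReal.ofReal_mul hq0.le, ← ENNReal.ofReal_one, ← ENNReal.ofReal_sub 1 h0]
      refine ENNReal.ofReal_le_ofReal ?_
      nlinarith [Real.add_one_le_exp (-(q * S.P (C (M + (j : ℕ) + 1))))]
    calc ∏ j : Fin N,
          ((1 : ENNReal) - ENNReal.ofReal q * ENNReal.ofReal (S.P (C (M + (j : ℕ) + 1))))
        ≤ ∏ j : Fin N, ENNReal.ofReal (Real.exp (- (q * S.P (C (M + (j : ℕ) + 1))))) :=
          Finset.prod_le_prod' fun j _ => hfac j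
      _ = ENNReal.ofReal (∏ j : Fin N, Real.exp (- (q * S.P (C (M + (j : ℕ) + 1))))) :=
          (ENNReal.ofReal_prod_of_nonneg fun j _ => (Real.exp_pos _).le).symm
      _ = ENNReal.ofReal (Real.exp (∑ j : Fin N, - (q * S.P (C (M + (j : ℕ) + 1))))) := by
          rw [Real.exp_sum]
      _ = ENNReal.ofReal (Real.exp (- (q * ∑ j ∈ Finset.range N, S.P (C (M + j + 1))))) := by
          congr 1
          rw [Fin.sum_univ_eq_sum_range (fun j => - (q * S.P (C (M + j + 1)))) N]
          rw [Finset.mul_sum, ← Finset.sum_neg_distrib]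
  have h1 : Tendsto (fun N => ∑ j ∈ Finset.range N, S.P (C (M + j + 1))) atTop atTop := by
    have hnotsum : ¬ Summable (fun j => S.P (C (M + j + 1))) := by
      intro hS
      apply hsum
      have he : (fun j => S.P (C (M + j + 1))) = fun j => S.P (C (j + (M + 1))) := by
        funext j; congr 2; omega
      rw [he] at hS
      exact (summable_nat_add_iff (M + 1)).mp hS
    exact (not_summable_iff_tendsto_nat_atTop_of_nonneg (fun j => S.hP0 _)).mp hnotsum
  have h2 : Tendsto (fun N => - (q * ∑ j ∈ Finset.range N, S.P (C (M + j + 1)))) atTop atBot :=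
    Filter.tendsto_neg_atBot_iff.mpr (h1.const_mul_atTop hq0)
  have h3 : Tendsto
      (fun N => Real.exp (- (q * ∑ j ∈ Finset.range N, S.P (C (M + j + 1)))))
      atTop (nhds 0) := Real.tendsto_exp_atBot.comp h2
  have h4 : Tendsto
      (fun N => ENNReal.ofReal (Real.exp (- (q * ∑ j ∈ Finset.range N, S.P (C (M + j + 1))))))
      atTop (nhds 0) := by
    have := ENNReal.tendsto_ofReal h3
    simpa using this
  exact le_zero_iff.mp (ge_of_tendsto h4 (Filter.Eventually.of_forall hb))

end RandConsensus
/-! ### Pathwise convergence on the good event -/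

namespace RandConsensus

variable {Ω : Type*} [MeasurableSpace Ω] (S : RandConsensus Ω)

lemma state_succ (x0 : Fin S.n → ℝ) (k : ℕ) (ω : Ω) (i : Fin S.n) :
    S.state x0 (k + 1) ω i
      = if S.χ k i ω then ∑ j ∈ S.Nbr k ω i, S.a k i j ω * S.state x0 k ω j
        else S.state x0 k ω i := rfl

lemma det_tendsto (C : ℕ → ℕ) (hCmono : StrictMono C) (x0 : Fin S.n → ℝ) (ω : Ω)
    (hacycω : IsAcyclicRel (S.jointRel ω Set.univ))
    (hio : ∀ (i : Fin S.n) (M : ℕ), ∃ m, M ≤ m ∧ ω ∈ S.Dev C m i) :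
    Tendsto (fun k => S.spread (S.state x0 k ω)) atTop (nhds 0) := by
  classical
  have hnpos : 0 < S.n := by have := S.hn; omega
  set i0 : Fin S.n := ⟨0, hnpos⟩ with hi0
  have hη0 := S.hη
  have hη1 : S.η ≤ 1 := by
    have h := S.hasum 0 i0 ω
    have h3 : S.a 0 i0 i0 ω
        ≤ ∑ j ∈ insert i0 (Finset.univ.filter fun j' => S.E 0 ω j' i0 = true),
            S.a 0 i0 j ω :=
      Finset.single_le_sum (fun j hj => le_trans hη0.le (S.hηa 0 i0 ω j hj))
        (Finset.mem_insert_self _ _)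
    have h2 := S.hηa 0 i0 ω i0 (Finset.mem_insert_self _ _)
    linarith
  set R : Fin S.n → Fin S.n → Prop := S.jointRel ω Set.univ with hR
  have hRE : ∀ k u v, S.E k ω u v = true → R u v := fun k u v h => ⟨k, trivial, h⟩
  -- the common root
  obtain ⟨m0, _, hm0⟩ := hio i0 0
  obtain ⟨r, hr⟩ := hm0.1
  have hrR : ∀ j, Relation.ReflTransGen R r j := by
    intro j
    refine Relation.ReflTransGen.mono ?_ _ _ (hr j)
    rintro u v ⟨k, _, hk⟩
    exact ⟨k, trivial, hk⟩
  have hroot : ∀ m, ω ∈ S.QSCev C m → ∀ j : Fin S.n,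
      Relation.ReflTransGen (S.jointRel ω (Set.Ico (C m) (C (m + 1)))) r j := by
    intro m hm j
    obtain ⟨r', hr'⟩ := hm
    have hr'R : ∀ j', Relation.ReflTransGen R r' j' := by
      intro j'
      refine Relation.ReflTransGen.mono ?_ _ _ (hr' j')
      rintro u v ⟨k, _, hk⟩
      exact ⟨k, trivial, hk⟩
    have hrr : r' = r := by
      by_contra hne
      rcases Relation.reflTransGen_iff_eq_or_transGen.mp (hrR r') with h | h
      · exact hne h
      · rcases Relation.reflTransGen_iff_eq_or_transGen.mp (hr'R r) with h2 | h2
        · exact hne h2.symm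
        · exact hacycω r (h.trans h2)
    rw [← hrr]
    exact hr' j
  have hnoin : ∀ k u, ¬ (S.E k ω u r = true) := by
    intro k u h
    exact hacycω r (Relation.TransGen.tail' (hrR u) (hRE k u r h))
  have hNbr_r : ∀ k, S.Nbr k ω r = {r} := by
    intro k
    rw [Nbr]
    have h : (Finset.univ.filter fun j => S.E k ω j r = true) = ∅ :=
      Finset.filter_eq_empty_iff.mpr fun j _ => hnoin k j
    rw [h]
    rfl
  have hstater : ∀ k, S.state x0 k ω r = x0 r := by
    intro k
    induction k with
    | zero => rfl
    | succ k ih =>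
        rw [S.state_succ x0 k ω r]
        split_ifs with hχk
        · have hsum1' : ∑ j ∈ S.Nbr k ω r, S.a k r j ω = 1 := S.hasum k r ω
          rw [hNbr_r k] at hsum1' ⊢
          rw [Finset.sum_singleton] at hsum1' ⊢
          rw [hsum1', one_mul, ih]
        · exact ih
  have hwf : WellFounded (Relation.TransGen R) := by
    haveI : IsIrrefl (Fin S.n) (Relation.TransGen R) := ⟨hacycω⟩
    exact Finite.wellFounded_of_trans_of_irrefl _
  set L := x0 r with hL
  have hconv : ∀ i : Fin S.n, Tendsto (fun k => S.state x0 k ω i) atTop (nhds L) := by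
    intro i
    refine hwf.induction (C := fun i => Tendsto (fun k => S.state x0 k ω i) atTop (nhds L)) i ?_
    intro i IH
    show Tendsto (fun k => S.state x0 k ω i) atTop (nhds L)
    by_cases hir : i = r
    · have he : (fun k => S.state x0 k ω i) = fun _ => L :=
        funext fun k => by rw [hir]; exact hstater k
      rw [he]
      exact tendsto_const_nhds
    · rw [Metric.tendsto_atTop]
      intro ε hε
      set ε' := ε * S.η / (2 * (S.η + 1)) with hε'def
      have hε'0 : 0 < ε' := by rw [hε'def]; positivity
      have hsum_ε' : ε' + ε' / S.η = ε / 2 := by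
        rw [hε'def]
        field_simp
      have hpred : ∀ᶠ k in atTop, ∀ j : Fin S.n, Relation.TransGen R j i →
          |S.state x0 k ω j - L| ≤ ε' := by
        refine Filter.eventually_all.mpr fun j => ?_
        by_cases hji : Relation.TransGen R j i
        · have hjt : Tendsto (fun k => S.state x0 k ω j) atTop (nhds L) := IH j hji
          rw [Metric.tendsto_atTop] at hjt
          obtain ⟨Nj, hNj⟩ := hjt ε' hε'0
          filter_upwards [eventually_ge_atTop Nj] with k hk
          intro _
          have hd := hNj k hk
          rw [Real.dist_eq] at hd
          exact hd.le
        · filter_upwards with k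
          exact fun h => absurd h hji
      obtain ⟨T, hT⟩ := Filter.eventually_atTop.mp hpred
      set d : ℕ → ℝ := fun k => |S.state x0 k ω i - L| with hd
      have hstep_any : ∀ k, T ≤ k → d (k + 1) ≤ max (d k) ε' := by
        intro k hk
        show |S.state x0 (k + 1) ω i - L| ≤ max (d k) ε'
        rw [S.state_succ x0 k ω i]
        split_ifs with hχk
        · have hsum1 : ∑ j ∈ S.Nbr k ω i, S.a k i j ω = 1 := S.hasum k i ω
          have hrw : ∑ j ∈ S.Nbr k ω i, S.a k i j ω * S.state x0 k ω j - L
              = ∑ j ∈ S.Nbr k ω i, S.a k i j ω * (S.state x0 k ω j - L) := by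
            simp only [mul_sub]
            rw [Finset.sum_sub_distrib, ← Finset.sum_mul, hsum1, one_mul]
          rw [hrw]
          have habs : |∑ j ∈ S.Nbr k ω i, S.a k i j ω * (S.state x0 k ω j - L)|
              ≤ ∑ j ∈ S.Nbr k ω i, S.a k i j ω * |S.state x0 k ω j - L| := by
            refine (Finset.abs_sum_le_sum_abs _ _).trans (le_of_eq ?_)
            refine Finset.sum_congr rfl fun j hj => ?_
            rw [abs_mul, abs_of_nonneg (le_trans hη0.le (S.hηa k i ω j hj))]
          refine habs.trans ?_
          have hbound : ∀ j ∈ S.Nbr k ω i, |S.state x0 k ω j - L| ≤ max (d k) ε' := by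
            intro j hj
            rcases Finset.mem_insert.mp hj with hji | hjf
            · rw [hji]
              exact le_max_left _ _
            · have hE := (Finset.mem_filter.mp hjf).2
              exact (hT k hk j (Relation.TransGen.single (hRE k j i hE))).trans
                (le_max_right _ _)
          calc ∑ j ∈ S.Nbr k ω i, S.a k i j ω * |S.state x0 k ω j - L|
              ≤ ∑ j ∈ S.Nbr k ω i, S.a k i j ω * max (d k) ε' :=
                Finset.sum_le_sum fun j hj => mul_le_mul_of_nonneg_left (hbound j hj)
                  (le_trans hη0.le (S.hηa k i ω j hj))
            _ = max (d k) ε' := by rw [← Finset.sum_mul, hsum1, one_mul]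
        · exact le_max_left _ _
      have hspecial : ∀ B, ∃ k, B ≤ k ∧ T ≤ k ∧ d (k + 1) ≤ (1 - S.η) * d k + ε' := by
        intro B
        obtain ⟨m, hmB, hQ, hχτ⟩ := hio i (max B T)
        set k := S.tauF C m i (S.Efun ω) with hkdef
        have hkmem := S.tauF_mem_Ico C (hCmono (Nat.lt_succ_self m)) i (S.Efun ω)
        rw [Finset.mem_Ico] at hkmem
        have hCm : max B T ≤ C m := le_trans hmB hCmono.le_apply
        have hBk : B ≤ k := le_trans (le_trans (le_max_left _ _) hCm) hkmem.1
        have hTk : T ≤ k := le_trans (le_trans (le_max_right _ _) hCm) hkmem.1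
        have harc : ∃ u, S.E k ω u i = true := by
          have hreach := hroot m hQ i
          rcases Relation.reflTransGen_iff_eq_or_transGen.mp hreach with h | h
          · exact absurd h hir
          · obtain ⟨u, _, hu⟩ := Relation.TransGen.tail'_iff.mp h
            obtain ⟨k', hk'mem, hk'E⟩ := hu
            have hne : (S.arcTimesF C m i (S.Efun ω)).Nonempty := by
              refine ⟨k', Finset.mem_filter.mpr ⟨?_, ⟨u, hk'E⟩⟩⟩
              rw [Finset.mem_Ico]
              exact hk'mem
            exact S.exists_arc_at_tauF C i (S.Efun ω) hne
        obtain ⟨u, huE⟩ := harc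
        refine ⟨k, hBk, hTk, ?_⟩
        have hχk : S.χ k i ω = true := hχτ
        show |S.state x0 (k + 1) ω i - L| ≤ (1 - S.η) * d k + ε'
        rw [S.state_succ x0 k ω i, if_pos hχk]
        have hiNf : i ∉ (Finset.univ.filter fun j' => S.E k ω j' i = true) := by
          simp [S.hEirrefl k ω i]
        have huf : u ∈ (Finset.univ.filter fun j' => S.E k ω j' i = true) := by
          simp [huE]
        have hsum1 : S.a k i i ω
            + ∑ j ∈ Finset.univ.filter (fun j' => S.E k ω j' i = true), S.a k i j ω = 1 := by
          have h := S.hasum k i ω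
          rwa [Finset.sum_insert hiNf] at h
        have haii0 : 0 ≤ S.a k i i ω :=
          le_trans hη0.le (S.hηa k i ω i (Finset.mem_insert_self _ _))
        have haii1 : S.a k i i ω ≤ 1 - S.η := by
          have h1 : S.η ≤ S.a k i u ω := S.hηa k i ω u (Finset.mem_insert_of_mem huf)
          have h2 : S.a k i u ω
              ≤ ∑ j ∈ Finset.univ.filter (fun j' => S.E k ω j' i = true), S.a k i j ω :=
            Finset.single_le_sum
              (fun j hj => le_trans hη0.le (S.hηa k i ω j (Finset.mem_insert_of_mem hj))) huf
          linarith
        have hrw : ∑ j ∈ S.Nbr k ω i, S.a k i j ω * S.state x0 k ω j - L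
            = ∑ j ∈ S.Nbr k ω i, S.a k i j ω * (S.state x0 k ω j - L) := by
          have hsum1' : ∑ j ∈ S.Nbr k ω i, S.a k i j ω = 1 := S.hasum k i ω
          simp only [mul_sub]
          rw [Finset.sum_sub_distrib, ← Finset.sum_mul, hsum1', one_mul]
        rw [hrw]
        have hsplit : ∑ j ∈ S.Nbr k ω i, S.a k i j ω * (S.state x0 k ω j - L)
            = S.a k i i ω * (S.state x0 k ω i - L)
              + ∑ j ∈ Finset.univ.filter (fun j' => S.E k ω j' i = true),
                  S.a k i j ω * (S.state x0 k ω j - L) :=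
          Finset.sum_insert hiNf
        rw [hsplit]
        refine (abs_add_le _ _).trans ?_
        have h1 : |S.a k i i ω * (S.state x0 k ω i - L)| ≤ (1 - S.η) * d k := by
          rw [abs_mul, abs_of_nonneg haii0]
          exact mul_le_mul_of_nonneg_right haii1 (abs_nonneg _)
        have h2 : |∑ j ∈ Finset.univ.filter (fun j' => S.E k ω j' i = true),
            S.a k i j ω * (S.state x0 k ω j - L)| ≤ ε' := by
          refine (Finset.abs_sum_le_sum_abs _ _).trans ?_
          have hterm : ∀ j ∈ Finset.univ.filter (fun j' => S.E k ω j' i = true),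
              |S.a k i j ω * (S.state x0 k ω j - L)| ≤ S.a k i j ω * ε' := by
            intro j hj
            have hja0 : 0 ≤ S.a k i j ω :=
              le_trans hη0.le (S.hηa k i ω j (Finset.mem_insert_of_mem hj))
            rw [abs_mul, abs_of_nonneg hja0]
            refine mul_le_mul_of_nonneg_left ?_ hja0
            have hE := (Finset.mem_filter.mp hj).2
            exact hT k hTk j (Relation.TransGen.single (hRE k j i hE))
          refine (Finset.sum_le_sum hterm).trans ?_
          rw [← Finset.sum_mul]
          have hle : ∑ j ∈ Finset.univ.filter (fun j' => S.E k ω j' i = true),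
              S.a k i j ω ≤ 1 := by linarith
          calc (∑ j ∈ Finset.univ.filter (fun j' => S.E k ω j' i = true),
              S.a k i j ω) * ε' ≤ 1 * ε' := mul_le_mul_of_nonneg_right hle hε'0.le
            _ = ε' := one_mul _
        linarith
      obtain ⟨T', hT'⟩ :=
        seq_shrink hη0 hη1 hε'0 d (fun k => abs_nonneg _) T hstep_any hspecial
      refine ⟨T', fun k hk => ?_⟩
      rw [Real.dist_eq]
      calc |S.state x0 k ω i - L| = d k := rfl
        _ ≤ ε' + ε' / S.η := hT' k hk
        _ = ε / 2 := hsum_ε'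
        _ < ε := by linarith
  -- conclude for the spread
  rw [Metric.tendsto_atTop]
  intro ε hε
  have h3 : ∀ᶠ k in atTop, ∀ i : Fin S.n, |S.state x0 k ω i - L| < ε / 3 := by
    refine Filter.eventually_all.mpr fun i => ?_
    have hco := hconv i
    rw [Metric.tendsto_atTop] at hco
    obtain ⟨N, hN⟩ := hco (ε / 3) (by linarith)
    filter_upwards [eventually_ge_atTop N] with k hk
    have hd := hN k hk
    rwa [Real.dist_eq] at hd
  obtain ⟨T, hT⟩ := Filter.eventually_atTop.mp h3
  refine ⟨T, fun k hk => ?_⟩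
  have hb := hT k hk
  rw [Real.dist_eq, sub_zero]
  have hnon : 0 ≤ S.spread (S.state x0 k ω) := by
    rw [spread]
    have h1 : Finset.univ.inf' ⟨⟨0, by have := S.hn; omega⟩, Finset.mem_univ _⟩
        (S.state x0 k ω) ≤ S.state x0 k ω i0 := Finset.inf'_le _ (Finset.mem_univ _)
    have h2 : S.state x0 k ω i0 ≤ Finset.univ.sup'
        ⟨⟨0, by have := S.hn; omega⟩, Finset.mem_univ _⟩ (S.state x0 k ω) :=
      Finset.le_sup' _ (Finset.mem_univ _)
    linarith
  rw [abs_of_nonneg hnon]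
  have hspr : S.spread (S.state x0 k ω) ≤ 2 * (ε / 3) := by
    rw [spread, sub_le_iff_le_add]
    refine Finset.sup'_le _ _ fun j _ => ?_
    have h1 := abs_lt.mp (hb j)
    have h2 : L - ε / 3 ≤ Finset.univ.inf' ⟨⟨0, by have := S.hn; omega⟩, Finset.mem_univ _⟩
        (S.state x0 k ω) :=
      Finset.le_inf' _ _ fun j' _ => by
        have h3 := abs_lt.mp (hb j')
        linarith [h3.1]
    linarith [h1.2]
  linarith
end RandConsensus
/-- Corollary 3 (i) of the paper: if the joint graph on `[0,∞)` is almost surely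
acyclic, the graph process is stochastically infinitely quasi-strongly connected,
and `P_k` is nonincreasing, then `∑ P_{C_m} = ∞` implies global a.s. consensus. -/
theorem consensus_acyclic_monotone {Ω : Type*} [MeasurableSpace Ω]
    (S : RandConsensus Ω)
    (hacyc : S.μ {ω | IsAcyclicRel (S.jointRel ω Set.univ)} = 1)
    (C : ℕ → ℕ) (hC0 : C 0 = 0) (hCmono : StrictMono C)
    (q : ℝ) (hq0 : 0 < q) (hq1 : q < 1)
    (hindep : iIndepSet
      (fun m : ℕ => {ω | IsQSC (S.jointRel ω (Set.Ico (C m) (C (m + 1))))}) S.μ)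
    (hconn : ∀ m : ℕ, ENNReal.ofReal q ≤
      S.μ {ω | IsQSC (S.jointRel ω (Set.Ico (C m) (C (m + 1))))})
    (hmono : ∀ k, S.P (k + 1) ≤ S.P k)
    (hsum : ¬ Summable (fun m => S.P (C m))) :
    S.consensus := by
  classical
  haveI := S.hμ
  intro x0
  set Good : Set Ω :=
    {ω | Tendsto (fun k => S.spread (S.state x0 k ω)) atTop (nhds 0)} with hGood
  have hAmeas : MeasurableSet {ω | IsAcyclicRel (S.jointRel ω Set.univ)} := by
    apply measurableSet_isAcyclicRel
    intro u v
    have h : {ω | S.jointRel ω Set.univ u v} = ⋃ k : ℕ, {ω | S.E k ω u v = true} := by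
      ext ω
      simp [RandConsensus.jointRel]
    rw [h]
    exact MeasurableSet.iUnion fun k => S.hE k u v (measurableSet_singleton true)
  have hA0 : S.μ {ω | IsAcyclicRel (S.jointRel ω Set.univ)}ᶜ = 0 := by
    rw [measure_compl hAmeas (measure_ne_top _ _), measure_univ, hacyc, tsub_self]
  have hDev0 : ∀ (i : Fin S.n) (M : ℕ), S.μ (⋂ m ∈ Set.Ici M, (S.Dev C m i)ᶜ) = 0 :=
    fun i M => S.meas_iInter_Ici_Dev_compl C hCmono q hq0 hindep hconn hmono hsum i M
  set Bad : Set Ω := {ω | IsAcyclicRel (S.jointRel ω Set.univ)}ᶜ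
      ∪ ⋃ (i : Fin S.n) (M : ℕ), ⋂ m ∈ Set.Ici M, (S.Dev C m i)ᶜ with hBad
  have hBad0 : S.μ Bad = 0 := by
    rw [hBad]
    exact measure_union_null hA0
      (measure_iUnion_null fun i => measure_iUnion_null fun M => hDev0 i M)
  have hsubset : Badᶜ ⊆ Good := by
    intro ω hω
    rw [hBad, Set.compl_union, compl_compl] at hω
    obtain ⟨hac, hnU⟩ := hω
    have hio : ∀ (i : Fin S.n) (M : ℕ), ∃ m, M ≤ m ∧ ω ∈ S.Dev C m i := by
      intro i M
      by_contra h
      push_neg at h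
      exact (Set.mem_compl_iff _ _).mp hnU
        (Set.mem_iUnion.mpr ⟨i, Set.mem_iUnion.mpr
          ⟨M, Set.mem_iInter₂.mpr fun m hm => h m hm⟩⟩)
    exact S.det_tendsto C hCmono x0 ω hac hio
  have hcompl0 : S.μ Goodᶜ = 0 :=
    measure_mono_null (Set.compl_subset_comm.mp hsubset) hBad0
  have hge : 1 ≤ S.μ Good := by
    calc (1 : ENNReal) = S.μ (Good ∪ Goodᶜ) := by
          rw [Set.union_compl_self, measure_univ]
      _ ≤ S.μ Good + S.μ Goodᶜ := measure_union_le _ _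
      _ = S.μ Good := by rw [hcompl0, add_zero]
  exact le_antisymm prob_le_one hge
end

section
/- For any k ≥ 1 stochastic matrices M_1, …, M_k ∈ ℝ^{n×n}, one has δ(M_1 M_2 ⋯ M_k) ≤ ∏_{i=1}^k λ(M_i). -/
/-- A square real matrix is stochastic if its entries are nonnegative and each of its
rows sums to one. -/
def IsStochasticMat {n : ℕ} (M : Matrix (Fin n) (Fin n) ℝ) : Prop :=
  (∀ i j, 0 ≤ M i j) ∧ ∀ i, ∑ j, M i j = 1

/-- `δ(M) = max_j max_{α,β} |m_{αj} - m_{βj}|`. -/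
noncomputable def deltaMat {n : ℕ} (M : Matrix (Fin n) (Fin n) ℝ) : ℝ :=
  ⨆ j, ⨆ α, ⨆ β, |M α j - M β j|

/-- `λ(M) = 1 - min_{α,β} ∑_j min (m_{αj}) (m_{βj})`. -/
noncomputable def lamMat {n : ℕ} (M : Matrix (Fin n) (Fin n) ℝ) : ℝ :=
  1 - ⨅ α, ⨅ β, ∑ j, min (M α j) (M β j)

section Aux
set_option linter.unusedSectionVars false

variable {n : ℕ} [NeZero n]

lemma aux_max_sub_zero (x y : ℝ) : max (x - y) 0 = x - min x y := by
  rcases le_total x y with h | h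
  · simp [min_eq_left h, sub_nonpos.2 h, max_eq_right]
  · simp [min_eq_right h, sub_nonneg.2 h, max_eq_left]

lemma aux_abs_le_delta (N : Matrix (Fin n) (Fin n) ℝ) (α β j : Fin n) :
    |N α j - N β j| ≤ deltaMat N := by
  have h1 : |N α j - N β j| ≤ ⨆ β, |N α j - N β j| :=
    le_ciSup (f := fun β => |N α j - N β j|) (Set.Finite.bddAbove (Set.finite_range _)) β
  have h2 : (⨆ β, |N α j - N β j|) ≤ ⨆ α, ⨆ β, |N α j - N β j| :=
    le_ciSup (f := fun α => ⨆ β, |N α j - N β j|) (Set.Finite.bddAbove (Set.finite_range _)) α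
  have h3 : (⨆ α, ⨆ β, |N α j - N β j|) ≤ deltaMat N :=
    le_ciSup (f := fun j => ⨆ α, ⨆ β, |N α j - N β j|) (Set.Finite.bddAbove (Set.finite_range _)) j
  linarith

lemma aux_delta_nonneg (N : Matrix (Fin n) (Fin n) ℝ) : 0 ≤ deltaMat N := by
  have i : Fin n := Classical.arbitrary _
  have := aux_abs_le_delta N i i i
  simpa using this

lemma aux_sum_min_le_lam (M : Matrix (Fin n) (Fin n) ℝ) (α β : Fin n) :
    1 - ∑ j, min (M α j) (M β j) ≤ lamMat M := by
  have h1 : (⨅ α, ⨅ β, ∑ j, min (M α j) (M β j)) ≤ ⨅ β, ∑ j, min (M α j) (M β j) :=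
    ciInf_le (Set.Finite.bddBelow (Set.finite_range _)) α
  have h2 : (⨅ β, ∑ j, min (M α j) (M β j)) ≤ ∑ j, min (M α j) (M β j) :=
    ciInf_le (Set.Finite.bddBelow (Set.finite_range _)) β
  unfold lamMat
  linarith

lemma aux_lam_nonneg (M : Matrix (Fin n) (Fin n) ℝ) (hM : IsStochasticMat M) :
    0 ≤ lamMat M := by
  have i : Fin n := Classical.arbitrary _
  have h := aux_sum_min_le_lam M i i
  have hs : ∑ j, min (M i j) (M i j) = 1 := by simpa [min_self] using hM.2 i
  linarith

lemma aux_delta_le_lam (M : Matrix (Fin n) (Fin n) ℝ) (hM : IsStochasticMat M) :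
    deltaMat M ≤ lamMat M := by
  unfold deltaMat
  refine ciSup_le fun j => ciSup_le fun α => ciSup_le fun β => ?_
  rw [abs_sub_le_iff]
  have key : ∀ α β : Fin n, M α j - M β j ≤ lamMat M := by
    intro α β
    have h1 : M α j - M β j ≤ M α j - min (M α j) (M β j) := by
      have := min_le_right (M α j) (M β j); linarith
    have h2 : M α j - min (M α j) (M β j) ≤ ∑ s, (M α s - min (M α s) (M β s)) := by
      have := Finset.single_le_sum (f := fun s => M α s - min (M α s) (M β s))
        (fun s _ => sub_nonneg.2 (min_le_left _ _))
        (Finset.mem_univ j)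
      exact this
    have h3 : ∑ s, (M α s - min (M α s) (M β s)) = 1 - ∑ s, min (M α s) (M β s) := by
      rw [Finset.sum_sub_distrib, hM.2 α]
    have h4 := aux_sum_min_le_lam M α β
    linarith
  exact ⟨key α β, key β α⟩

lemma aux_mul_stochastic (M N : Matrix (Fin n) (Fin n) ℝ)
    (hM : IsStochasticMat M) (hN : IsStochasticMat N) : IsStochasticMat (M * N) := by
  constructor
  · intro i j
    rw [Matrix.mul_apply]
    exact Finset.sum_nonneg fun s _ => mul_nonneg (hM.1 i s) (hN.1 s j)
  · intro i
    simp_rw [Matrix.mul_apply]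
    rw [Finset.sum_comm]
    simp_rw [← Finset.mul_sum, hN.2, mul_one]
    exact hM.2 i

lemma aux_key (M N : Matrix (Fin n) (Fin n) ℝ)
    (hM : IsStochasticMat M) :
    deltaMat (M * N) ≤ lamMat M * deltaMat N := by
  unfold deltaMat
  refine ciSup_le fun j => ciSup_le fun α => ciSup_le fun β => ?_
  rw [abs_sub_le_iff]
  have key : ∀ α β : Fin n, (M * N) α j - (M * N) β j ≤ lamMat M * deltaMat N := by
    intro α β
    obtain ⟨s₀, -, hs₀⟩ := Finset.exists_max_image Finset.univ (fun s => N s j)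
      Finset.univ_nonempty
    obtain ⟨s₁, -, hs₁⟩ := Finset.exists_min_image Finset.univ (fun s => N s j)
      Finset.univ_nonempty
    set c : ℝ := ∑ s, max (M α s - M β s) 0 with hc
    have hc_nonneg : 0 ≤ c :=
      Finset.sum_nonneg fun s _ => le_max_right _ _
    have hc_eq : c = 1 - ∑ s, min (M α s) (M β s) := by
      rw [hc]
      simp_rw [aux_max_sub_zero]
      rw [Finset.sum_sub_distrib, hM.2 α]
    have hc_eq' : (∑ s, max (M β s - M α s) 0) = c := by
      simp_rw [aux_max_sub_zero]
      rw [Finset.sum_sub_distrib, hM.2 β, hc_eq]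
      congr 1
      exact Finset.sum_congr rfl fun s _ => min_comm _ _
    have hdecomp : (M * N) α j - (M * N) β j
        = (∑ s, max (M α s - M β s) 0 * N s j) - ∑ s, max (M β s - M α s) 0 * N s j := by
      rw [Matrix.mul_apply, Matrix.mul_apply, ← Finset.sum_sub_distrib,
        ← Finset.sum_sub_distrib]
      refine Finset.sum_congr rfl fun s _ => ?_
      rw [← sub_mul, ← sub_mul]
      congr 1
      have : -(M α s - M β s) = M β s - M α s := by ring
      rw [← this, max_zero_sub_max_neg_zero_eq_self]
    have hup : (∑ s, max (M α s - M β s) 0 * N s j) ≤ c * N s₀ j := by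
      rw [hc, Finset.sum_mul]
      exact Finset.sum_le_sum fun s _ =>
        mul_le_mul_of_nonneg_left (hs₀ s (Finset.mem_univ s)) (le_max_right _ _)
    have hdown : c * N s₁ j ≤ ∑ s, max (M β s - M α s) 0 * N s j := by
      rw [← hc_eq', Finset.sum_mul]
      exact Finset.sum_le_sum fun s _ =>
        mul_le_mul_of_nonneg_left (hs₁ s (Finset.mem_univ s)) (le_max_right _ _)
    have hdn : N s₀ j - N s₁ j ≤ deltaMat N :=
      le_trans (le_abs_self _) (aux_abs_le_delta N s₀ s₁ j)
    have hcl : c ≤ lamMat M := by rw [hc_eq]; exact aux_sum_min_le_lam M α β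
    have hdN : 0 ≤ deltaMat N := aux_delta_nonneg N
    calc (M * N) α j - (M * N) β j ≤ c * N s₀ j - c * N s₁ j := by
          rw [hdecomp]; linarith
      _ = c * (N s₀ j - N s₁ j) := by ring
      _ ≤ c * deltaMat N := mul_le_mul_of_nonneg_left hdn hc_nonneg
      _ ≤ lamMat M * deltaMat N := mul_le_mul_of_nonneg_right hcl hdN
  exact ⟨key α β, key β α⟩

lemma aux_list (l : List (Matrix (Fin n) (Fin n) ℝ))
    (hl : l ≠ []) (h : ∀ A ∈ l, IsStochasticMat A) :
    deltaMat l.prod ≤ (l.map lamMat).prod := by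
  induction l with
  | nil => exact absurd rfl hl
  | cons A t ih =>
    have hA : IsStochasticMat A := h A List.mem_cons_self
    rcases eq_or_ne t [] with rfl | ht
    · simpa using aux_delta_le_lam A hA
    · have ht' := ih ht (fun B hB => h B (List.mem_cons_of_mem _ hB))
      rw [List.prod_cons, List.map_cons, List.prod_cons]
      calc deltaMat (A * t.prod) ≤ lamMat A * deltaMat t.prod := aux_key _ _ hA
        _ ≤ lamMat A * (t.map lamMat).prod :=
            mul_le_mul_of_nonneg_left ht' (aux_lam_nonneg A hA)

end Aux

/-- Lemma 5 of the paper (Hajnal): for stochastic matrices `M_1, …, M_k`,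
`δ(M_1 M_2 ⋯ M_k) ≤ ∏ᵢ λ(M_i)`. -/
theorem delta_prod_le_prod_lam (n k : ℕ) (hn : 0 < n) (hk : 1 ≤ k)
    (M : Fin k → Matrix (Fin n) (Fin n) ℝ)
    (hM : ∀ i, IsStochasticMat (M i)) :
    deltaMat (List.ofFn M).prod ≤ ∏ i, lamMat (M i) := by
  haveI : NeZero n := ⟨hn.ne'⟩
  have h := aux_list (List.ofFn M) (by
      simp [List.ofFn_eq_nil_iff]; omega)
    (by intro A hA; rw [List.mem_ofFn] at hA; obtain ⟨i, rfl⟩ := hA; exact hM i)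
  rwa [List.map_ofFn, List.prod_ofFn] at h
end

section
/- Let M_1, …, M_{n−1} ∈ ℝ^{n×n} be stochastic matrices with positive diagonal entries, and suppose there exists a node i0 ∈ {1,…,n} that is a root of the induced graph of M_τ for every τ = 1,…,n−1. Then the product M_{n−1} ⋯ M_1 is a scrambling matrix, i.e., λ(M_{n−1} ⋯ M_1) < 1. -/
lemma prodNonneg {n : ℕ} (R : List (Matrix (Fin n) (Fin n) ℝ))
    (h : ∀ A ∈ R, ∀ i j, 0 ≤ A i j) : ∀ i j, 0 ≤ R.prod i j := by
  induction R with
  | nil =>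
    intro i j
    simp [Matrix.one_apply]
    split <;> norm_num
  | cons A R ih =>
    intro i j
    rw [List.prod_cons, Matrix.mul_apply]
    exact Finset.sum_nonneg fun u _ =>
      mul_nonneg (h A (by simp) i u) (ih (fun B hB => h B (by simp [hB])) u j)

lemma reachEscape {n : ℕ} (A : Matrix (Fin n) (Fin n) ℝ) (S : Finset (Fin n)) (i0 : Fin n)
    (h0 : i0 ∈ S) {j : Fin n} (hj : Relation.ReflTransGen (fun u v => 0 < A v u) i0 j)
    (hjS : j ∉ S) : ∃ u ∈ S, ∃ v, v ∉ S ∧ 0 < A v u := by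
  revert hjS
  induction hj with
  | refl => intro h; exact absurd h0 h
  | @tail b c _ hbc ih =>
    intro hcS
    by_cases hb : b ∈ S
    · exact ⟨b, hb, c, hcS, hbc⟩
    · exact ih hb

lemma keyLemma {n : ℕ} (i0 : Fin n) (R : List (Matrix (Fin n) (Fin n) ℝ))
    (hnn : ∀ A ∈ R, ∀ i j, 0 ≤ A i j)
    (hd : ∀ A ∈ R, ∀ i, 0 < A i i)
    (hr : ∀ A ∈ R, ∀ j, Relation.ReflTransGen (fun u v => 0 < A v u) i0 j) :
    i0 ∈ Finset.univ.filter (fun v => 0 < R.prod v i0) ∧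
      min (R.length + 1) n ≤ (Finset.univ.filter (fun v => 0 < R.prod v i0)).card := by
  induction R with
  | nil =>
    constructor
    · rw [Finset.mem_filter]; simp [Matrix.one_apply]
    · have h1 : i0 ∈ Finset.univ.filter (fun v => 0 < (1 : Matrix (Fin n) (Fin n) ℝ) v i0) := by
        rw [Finset.mem_filter]; simp [Matrix.one_apply]
      have := Finset.card_pos.mpr ⟨i0, h1⟩
      simp only [List.length_nil, List.prod_nil]
      exact le_trans (min_le_left _ _) this
  | cons A R ih =>
    have hnn' : ∀ B ∈ R, ∀ i j, 0 ≤ B i j := fun B hB => hnn B (by simp [hB])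
    have hPnn := prodNonneg R hnn'
    have hAnn : ∀ i j, 0 ≤ A i j := hnn A (by simp)
    obtain ⟨hi0, hcard⟩ := ih hnn' (fun B hB => hd B (by simp [hB]))
      (fun B hB => hr B (by simp [hB]))
    set S' := Finset.univ.filter (fun v => 0 < R.prod v i0) with hS'
    set S := Finset.univ.filter (fun v => 0 < (A :: R).prod v i0) with hS
    have hsub : S' ⊆ S := by
      intro v hv
      simp only [hS', Finset.mem_filter] at hv
      rw [hS, Finset.mem_filter]; simp only [List.prod_cons, Matrix.mul_apply]
      refine ⟨Finset.mem_univ _, Finset.sum_pos' (fun u _ => mul_nonneg (hAnn v u) (hPnn u i0)) ?_⟩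
      exact ⟨v, Finset.mem_univ v, mul_pos (hd A (by simp) v) hv.2⟩
    refine ⟨hsub hi0, ?_⟩
    by_cases huniv : S' = Finset.univ
    · have : S = Finset.univ := Finset.eq_univ_of_forall fun v => hsub (huniv ▸ Finset.mem_univ v)
      rw [this, Finset.card_univ, Fintype.card_fin]
      omega
    · obtain ⟨j, hj⟩ : ∃ j, j ∉ S' := by
        by_contra h
        push_neg at h
        exact huniv (Finset.eq_univ_of_forall h)
      obtain ⟨u, hu, v, hv, hAvu⟩ := reachEscape A S' i0 hi0 (hr A (by simp) j) hj
      have hvS : v ∈ S := by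
        simp only [hS', Finset.mem_filter] at hu
        rw [hS, Finset.mem_filter]; simp only [List.prod_cons, Matrix.mul_apply]
        refine ⟨Finset.mem_univ _, Finset.sum_pos' (fun w _ => mul_nonneg (hAnn v w) (hPnn w i0)) ?_⟩
        exact ⟨u, Finset.mem_univ u, mul_pos hAvu hu.2⟩
      have hins : insert v S' ⊆ S := Finset.insert_subset hvS hsub
      have hc1 : (insert v S').card = S'.card + 1 := Finset.card_insert_of_notMem hv
      have hc2 : (insert v S').card ≤ S.card := Finset.card_le_card hins
      simp only [List.length_cons]
      omega

lemma posIInf {n : ℕ} [NeZero n] (f : Fin n → ℝ) (hf : ∀ i, 0 < f i) : 0 < ⨅ i, f i := by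
  obtain ⟨i, hi⟩ := Finite.exists_min f
  have h1 : ⨅ j, f j = f i :=
    le_antisymm (ciInf_le (Finite.bddBelow_range f) i) (le_ciInf hi)
  rw [h1]; exact hf i

/-- Lemma 7 of the paper: if `M_1, …, M_{n-1}` are stochastic matrices with positive
diagonal entries and some node `i0` is a root of the induced graph of each `M_τ`
(the induced graph has the arc `(j,i)` iff `m_{ij} > 0`), then the product
`M_{n-1} ⋯ M_1` is a scrambling matrix. -/
theorem prod_scrambling (n : ℕ) (hn : 2 ≤ n)
    (M : Fin (n - 1) → Matrix (Fin n) (Fin n) ℝ)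
    (hM : ∀ τ, IsStochasticMat (M τ)) (hdiag : ∀ τ i, 0 < M τ i i)
    (i0 : Fin n)
    (hroot : ∀ τ, ∀ j, Relation.ReflTransGen (fun u v => 0 < M τ v u) i0 j) :
    lamMat ((List.ofFn M).reverse.prod) < 1 := by
  have : NeZero n := ⟨by omega⟩
  rw [lamMat]
  set R := (List.ofFn M).reverse with hR
  have hmem : ∀ A ∈ R, ∃ τ, A = M τ := by
    intro A hA
    rw [hR, List.mem_reverse, List.mem_ofFn] at hA
    obtain ⟨τ, hτ⟩ := hA
    exact ⟨τ, hτ.symm⟩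
  have hnn : ∀ A ∈ R, ∀ i j, 0 ≤ A i j := by
    intro A hA; obtain ⟨τ, rfl⟩ := hmem A hA; exact (hM τ).1
  obtain ⟨_, hcard⟩ := keyLemma i0 R hnn
    (fun A hA => by obtain ⟨τ, rfl⟩ := hmem A hA; exact hdiag τ)
    (fun A hA => by obtain ⟨τ, rfl⟩ := hmem A hA; exact hroot τ)
  have hlen : R.length = n - 1 := by simp [hR]
  rw [hlen] at hcard
  have hmin : min (n - 1 + 1) n = n := by omega
  rw [hmin] at hcard
  have huniv : Finset.univ.filter (fun v => 0 < R.prod v i0) = Finset.univ := by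
    apply Finset.eq_univ_of_card
    have := Finset.card_le_univ (Finset.univ.filter (fun v => 0 < R.prod v i0))
    simp only [Finset.card_univ, Fintype.card_fin] at this ⊢
    omega
  have hpos : ∀ v, 0 < R.prod v i0 := by
    intro v
    have := huniv ▸ Finset.mem_univ v
    simpa using (Finset.mem_filter.mp this).2
  have hPnn := prodNonneg R hnn
  have hsum : ∀ α β : Fin n, 0 < ∑ j, min (R.prod α j) (R.prod β j) := by
    intro α β
    refine Finset.sum_pos' (fun j _ => le_min (hPnn α j) (hPnn β j)) ⟨i0, Finset.mem_univ i0, ?_⟩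
    exact lt_min (hpos α) (hpos β)
  have hinf : 0 < ⨅ α, ⨅ β, ∑ j, min (R.prod α j) (R.prod β j) :=
    posIInf _ fun α => posIInf _ fun β => hsum α β
  linarith
end
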